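/- The sequence (c_n)_{n ≥ 5} is strictly decreasing, where (c_n) is the first-order deficit coefficient sequence. -/

import Mathlib

def c : ℕ → ℚ
  | 0 => 0
  | 1 => 1
  | n + 2 =>
    (n + 2 : ℚ) / 2 ^ (n + 1) +
      (1 / 2 ^ (n + 2)) *
        ∑ j ∈ (Finset.Icc 1 (n + 1)).attach,
          ((n + 2).choose j.1 : ℚ) *
            (Finset.Icc j.1 (n + 1)).attach.inf'
              (Finset.attach_nonempty_iff.mpr
                (Finset.nonempty_Icc.mpr (Finset.mem_Icc.mp j.2).2))
              (fun m => c m.1)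
  decreasing_by
    exact Nat.lt_succ_of_le (Finset.mem_Icc.mp m.2).2

lemma inf'_attach_eq {s : Finset ℕ} (h : s.attach.Nonempty) (t : ℕ) (ht : t ∈ s)
    (hmin : ∀ m ∈ s, c t ≤ c m) :
    s.attach.inf' h (fun m => c m.1) = c t :=
  le_antisymm (Finset.inf'_le _ (Finset.mem_attach _ ⟨t, ht⟩))
    (Finset.le_inf' _ _ fun b _ => hmin b.1 b.2)

lemma c_eq' (n : ℕ) (w : ℕ → ℚ)
    (hw : ∀ j, 1 ≤ j → j ≤ n + 1 → ∀ h, (Finset.Icc j (n+1)).attach.inf' h (fun m => c m.1) = w j) :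
    c (n + 2) = (n + 2 : ℚ) / 2 ^ (n + 1) +
      (1 / 2 ^ (n + 2)) * ∑ j ∈ Finset.Icc 1 (n + 1), ((n + 2).choose j : ℚ) * w j := by
  rw [c]; congr 1; congr 1
  rw [← Finset.sum_attach (Finset.Icc 1 (n+1)) (fun j => ((n + 2).choose j : ℚ) * w j)]
  refine Finset.sum_congr rfl fun j _ => ?_
  have hj := Finset.mem_Icc.mp j.2
  rw [hw j.1 hj.1 hj.2]

lemma c0 : c 0 = 0 := by rw [c]
lemma c1 : c 1 = 1 := by rw [c]

lemma c2 : c 2 = 3/2 := by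
  have := c_eq' 0 c (by
    intro j h1 h2 h
    interval_cases j
    refine inf'_attach_eq h 1 (by decide) ?_
    intro m hm
    obtain ⟨hm1, hm2⟩ := Finset.mem_Icc.mp hm
    interval_cases m
    exact le_refl _)
  rw [show (2:ℕ) = 0 + 2 by rfl, this]
  rw [show Finset.Icc 1 1 = {1} by rfl]
  simp [c1]; norm_num

lemma c3 : c 3 = 27/16 := by
  have := c_eq' 1 c (by
    intro j h1 h2 h
    interval_cases j
    · refine inf'_attach_eq h 1 (by decide) ?_
      intro m hm
      obtain ⟨hm1, hm2⟩ := Finset.mem_Icc.mp hm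
      interval_cases m <;> norm_num [c1, c2]
    · exact inf'_attach_eq h 2 (by decide) (by
        intro m hm; obtain ⟨hm1, hm2⟩ := Finset.mem_Icc.mp hm; interval_cases m; exact le_refl _))
  rw [show (3:ℕ) = 1 + 2 by rfl, this]
  rw [show Finset.Icc 1 2 = {1, 2} by rfl]
  simp [Finset.sum_insert, c1, c2]
  norm_num [Nat.choose]

lemma c4 : c 4 = 111/64 := by
  have := c_eq' 2 c (by
    intro j h1 h2 h
    refine inf'_attach_eq h j (Finset.mem_Icc.mpr ⟨le_refl _, h2⟩) ?_
    intro m hm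
    obtain ⟨hm1, hm2⟩ := Finset.mem_Icc.mp hm
    interval_cases j <;> interval_cases m <;> norm_num [c1, c2, c3])
  rw [show (4:ℕ) = 2 + 2 by rfl, this]
  rw [show Finset.Icc 1 3 = {1, 2, 3} by rfl]
  simp [Finset.sum_insert, c1, c2, c3]
  norm_num [Nat.choose]

lemma c5 : c 5 = 3555/2048 := by
  have := c_eq' 3 c (by
    intro j h1 h2 h
    refine inf'_attach_eq h j (Finset.mem_Icc.mpr ⟨le_refl _, h2⟩) ?_
    intro m hm
    obtain ⟨hm1, hm2⟩ := Finset.mem_Icc.mp hm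
    interval_cases j <;> interval_cases m <;> norm_num [c1, c2, c3, c4])
  rw [show (5:ℕ) = 3 + 2 by rfl, this]
  rw [show Finset.Icc 1 4 = {1, 2, 3, 4} by rfl]
  simp [Finset.sum_insert, c1, c2, c3, c4]
  norm_num [Nat.choose]

lemma c6 : c 6 = 113337/65536 := by
  have := c_eq' 4 c (by
    intro j h1 h2 h
    refine inf'_attach_eq h j (Finset.mem_Icc.mpr ⟨le_refl _, h2⟩) ?_
    intro m hm
    obtain ⟨hm1, hm2⟩ := Finset.mem_Icc.mp hm
    interval_cases j <;> interval_cases m <;> norm_num [c1, c2, c3, c4, c5])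
  rw [show (6:ℕ) = 4 + 2 by rfl, this]
  rw [show Finset.Icc 1 5 = {1, 2, 3, 4, 5} by rfl]
  simp [Finset.sum_insert, c1, c2, c3, c4, c5]
  norm_num [Nat.choose]

lemma c_step (n : ℕ) (h5 : 5 ≤ n)
    (hmono : ∀ a b, 5 ≤ a → a ≤ b → b ≤ n + 1 → c b ≤ c a)
    (h4 : c (n+1) ≤ c 4) (h3 : 27/16 ≤ c (n+1)) :
    c (n + 2) = c (n+1) + (1 / 2 ^ (n + 2)) *
      (3*(n+2) - (n+2)*c (n+1) + ((n+2).choose 2 : ℚ)*(3/2 - c (n+1))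
        + ((n+2).choose 3 : ℚ)*(27/16 - c (n+1)) - 2*c (n+1)) := by
  have hlow : ∀ m, 1 ≤ m → m ≤ n+1 →
      1 ≤ c m ∧ (2 ≤ m → 3/2 ≤ c m) ∧ (3 ≤ m → 27/16 ≤ c m) ∧ (4 ≤ m → c (n+1) ≤ c m) := by
    intro m h1 h2
    rcases le_or_gt m 4 with hm | hm
    · interval_cases m
      · exact ⟨by norm_num [c1], fun h => by omega, fun h => by omega, fun h => by omega⟩
      · exact ⟨by norm_num [c2], fun _ => by norm_num [c2], fun h => by omega, fun h => by omega⟩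
      · exact ⟨by norm_num [c3], fun _ => by norm_num [c3], fun _ => by norm_num [c3],
          fun h => by omega⟩
      · exact ⟨by norm_num [c4], fun _ => by norm_num [c4], fun _ => by norm_num [c4],
          fun _ => h4⟩
    · have hc : c (n+1) ≤ c m := hmono m (n+1) (by omega) (by omega) (le_refl _)
      exact ⟨by linarith, fun _ => by linarith, fun _ => by linarith, fun _ => hc⟩
  set w : ℕ → ℚ := fun j =>
    if j = 1 then 1 else if j = 2 then 3/2 else if j = 3 then 27/16 else c (n+1) with hwdef
  have hkey := c_eq' n w (by
    intro j h1 h2 h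
    by_cases hj1 : j = 1
    · subst hj1
      rw [inf'_attach_eq h 1 (Finset.mem_Icc.mpr ⟨le_refl _, by omega⟩) (fun m hm => by
        obtain ⟨hm1, hm2⟩ := Finset.mem_Icc.mp hm
        rw [c1]; exact (hlow m hm1 hm2).1)]
      simp [hwdef, c1]
    · by_cases hj2 : j = 2
      · subst hj2
        rw [inf'_attach_eq h 2 (Finset.mem_Icc.mpr ⟨le_refl _, by omega⟩) (fun m hm => by
          obtain ⟨hm1, hm2⟩ := Finset.mem_Icc.mp hm
          rw [c2]; exact (hlow m (by omega) hm2).2.1 hm1)]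
        simp [hwdef, c2]
      · by_cases hj3 : j = 3
        · subst hj3
          rw [inf'_attach_eq h 3 (Finset.mem_Icc.mpr ⟨le_refl _, by omega⟩) (fun m hm => by
            obtain ⟨hm1, hm2⟩ := Finset.mem_Icc.mp hm
            rw [c3]; exact (hlow m (by omega) hm2).2.2.1 hm1)]
          simp [hwdef, c3]
        · have hj4 : 4 ≤ j := by omega
          rw [inf'_attach_eq h (n+1) (Finset.mem_Icc.mpr ⟨h2, le_refl _⟩) (fun m hm => by
            obtain ⟨hm1, hm2⟩ := Finset.mem_Icc.mp hm
            exact (hlow m (by omega) hm2).2.2.2 (by omega))]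
          simp only [hwdef]
          rw [if_neg hj1, if_neg hj2, if_neg hj3])
  -- now compute the sum
  have hsplit : Finset.Icc 1 (n+1) =
      insert 1 (insert 2 (insert 3 (Finset.Icc 4 (n+1)))) := by
    ext x; simp [Finset.mem_Icc, Finset.mem_insert]; omega
  have hsum : ∑ j ∈ Finset.Icc 1 (n+1), ((n + 2).choose j : ℚ) * w j
      = ((n+2) : ℚ) * 1 + ((n+2).choose 2 : ℚ) * (3/2) + ((n+2).choose 3 : ℚ) * (27/16)
        + (∑ j ∈ Finset.Icc 4 (n+1), ((n+2).choose j : ℚ)) * c (n+1) := by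
    rw [hsplit, Finset.sum_insert (by simp [Finset.mem_Icc]),
      Finset.sum_insert (by simp [Finset.mem_Icc]),
      Finset.sum_insert (by simp [Finset.mem_Icc])]
    have hrest : ∑ j ∈ Finset.Icc 4 (n+1), ((n + 2).choose j : ℚ) * w j
        = ∑ j ∈ Finset.Icc 4 (n+1), ((n + 2).choose j : ℚ) * c (n+1) := by
      refine Finset.sum_congr rfl fun j hj => ?_
      obtain ⟨hj1, hj2⟩ := Finset.mem_Icc.mp hj
      have : w j = c (n+1) := by
        simp only [hwdef]
        rw [if_neg (by omega), if_neg (by omega), if_neg (by omega)]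
      rw [this]
    rw [hrest, ← Finset.sum_mul]
    simp [hwdef, Nat.choose_one_right]
    ring
  have hbin : (∑ j ∈ Finset.Icc 4 (n+1), ((n+2).choose j : ℚ))
      = 2^(n+2) - 2 - (n+2) - ((n+2).choose 2 : ℚ) - ((n+2).choose 3 : ℚ) := by
    have hnat : (∑ j ∈ Finset.Icc 4 (n+1), (n+2).choose j)
        + ((n+2).choose 0 + (n+2).choose 1 + (n+2).choose 2 + (n+2).choose 3
          + (n+2).choose (n+2)) = 2^(n+2) := by
      rw [← Nat.sum_range_choose (n+2)]
      have hr : Finset.range (n+3) =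
          insert 0 (insert 1 (insert 2 (insert 3 (insert (n+2) (Finset.Icc 4 (n+1)))))) := by
        ext x; simp [Finset.mem_range, Finset.mem_Icc, Finset.mem_insert]; omega
      rw [hr, Finset.sum_insert (by simp [Finset.mem_Icc] <;> omega),
        Finset.sum_insert (by simp [Finset.mem_Icc] <;> omega),
        Finset.sum_insert (by simp [Finset.mem_Icc] <;> omega),
        Finset.sum_insert (by simp [Finset.mem_Icc] <;> omega),
        Finset.sum_insert (by simp [Finset.mem_Icc] <;> omega)]
      ring
    have := congrArg (fun x : ℕ => (x : ℚ)) hnat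
    push_cast at this
    simp [Nat.choose_one_right, Nat.choose_self] at this
    push_cast
    linarith
  rw [hkey, hsum, hbin]
  have h2p : (2:ℚ)^(n+2) = 2 * 2^(n+1) := by ring
  have h2ne : (2:ℚ)^(n+1) ≠ 0 := by positivity
  field_simp [h2p]
  push_cast
  ring

lemma c7 : c 7 = 14451591/8388608 := by
  have hmono : ∀ a b, 5 ≤ a → a ≤ b → b ≤ 6 → c b ≤ c a := by
    intro a b h1 h2 h3; have h4 : a ≤ b := h2; have h5 := le_trans h2 h3; interval_cases a <;> interval_cases b <;> norm_num [c5,c6]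
  have h := c_step 5 (by norm_num) hmono (by rw [show 5+1 = 6 from rfl, c6, c4]; norm_num) (by rw [show 5+1 = 6 from rfl, c6]; norm_num)
  rw [show 5+2 = 7 from rfl, show 5+1 = 6 from rfl, c6,
    (by rfl : (7:ℕ).choose 2 = 21), (by rfl : (7:ℕ).choose 3 = 35)] at h
  rw [h]; norm_num

lemma c8 : c 8 = 1843764663/1073741824 := by
  have hmono : ∀ a b, 5 ≤ a → a ≤ b → b ≤ 7 → c b ≤ c a := by
    intro a b h1 h2 h3; have h4 : a ≤ b := h2; have h5 := le_trans h2 h3; interval_cases a <;> interval_cases b <;> norm_num [c5,c6,c7]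
  have h := c_step 6 (by norm_num) hmono (by rw [show 6+1 = 7 from rfl, c7, c4]; norm_num) (by rw [show 6+1 = 7 from rfl, c7]; norm_num)
  rw [show 6+2 = 8 from rfl, show 6+1 = 7 from rfl, c7,
    (by rfl : (8:ℕ).choose 2 = 28), (by rfl : (8:ℕ).choose 3 = 56)] at h
  rw [h]; norm_num

lemma c9 : c 9 = 941650327899/549755813888 := by
  have hmono : ∀ a b, 5 ≤ a → a ≤ b → b ≤ 8 → c b ≤ c a := by
    intro a b h1 h2 h3; have h4 : a ≤ b := h2; have h5 := le_trans h2 h3; interval_cases a <;> interval_cases b <;> norm_num [c5,c6,c7,c8]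
  have h := c_step 7 (by norm_num) hmono (by rw [show 7+1 = 8 from rfl, c8, c4]; norm_num) (by rw [show 7+1 = 8 from rfl, c8]; norm_num)
  rw [show 7+2 = 9 from rfl, show 7+1 = 8 from rfl, c8,
    (by rfl : (9:ℕ).choose 2 = 36), (by rfl : (9:ℕ).choose 3 = 84)] at h
  rw [h]; norm_num

lemma c10 : c 10 = 962504571896853/562949953421312 := by
  have hmono : ∀ a b, 5 ≤ a → a ≤ b → b ≤ 9 → c b ≤ c a := by
    intro a b h1 h2 h3; have h4 : a ≤ b := h2; have h5 := le_trans h2 h3; interval_cases a <;> interval_cases b <;> norm_num [c5,c6,c7,c8,c9]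
  have h := c_step 8 (by norm_num) hmono (by rw [show 8+1 = 9 from rfl, c9, c4]; norm_num) (by rw [show 8+1 = 9 from rfl, c9]; norm_num)
  rw [show 8+2 = 10 from rfl, show 8+1 = 9 from rfl, c9,
    (by rfl : (10:ℕ).choose 2 = 45), (by rfl : (10:ℕ).choose 3 = 120)] at h
  rw [h]; norm_num

lemma c11 : c 11 = 1968712895268696291/1152921504606846976 := by
  have hmono : ∀ a b, 5 ≤ a → a ≤ b → b ≤ 10 → c b ≤ c a := by
    intro a b h1 h2 h3; have h4 : a ≤ b := h2; have h5 := le_trans h2 h3; interval_cases a <;> interval_cases b <;> norm_num [c5,c6,c7,c8,c9,c10]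
  have h := c_step 9 (by norm_num) hmono (by rw [show 9+1 = 10 from rfl, c10, c4]; norm_num) (by rw [show 9+1 = 10 from rfl, c10]; norm_num)
  rw [show 9+2 = 11 from rfl, show 9+1 = 10 from rfl, c10,
    (by rfl : (11:ℕ).choose 2 = 55), (by rfl : (11:ℕ).choose 3 = 165)] at h
  rw [h]; norm_num

lemma c12 : c 12 = 2014225165536796850559/1180591620717411303424 := by
  have hmono : ∀ a b, 5 ≤ a → a ≤ b → b ≤ 11 → c b ≤ c a := by
    intro a b h1 h2 h3; have h4 : a ≤ b := h2; have h5 := le_trans h2 h3; interval_cases a <;> interval_cases b <;> norm_num [c5,c6,c7,c8,c9,c10,c11]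
  have h := c_step 10 (by norm_num) hmono (by rw [show 10+1 = 11 from rfl, c11, c4]; norm_num) (by rw [show 10+1 = 11 from rfl, c11]; norm_num)
  rw [show 10+2 = 12 from rfl, show 10+1 = 11 from rfl, c11,
    (by rfl : (12:ℕ).choose 2 = 66), (by rfl : (12:ℕ).choose 3 = 220)] at h
  rw [h]; norm_num

lemma choose2 (n : ℕ) : ((n+2).choose 2 : ℚ) = (n+2)*(n+1)/2 := by
  induction n with
  | zero => norm_num [Nat.choose]
  | succ k ih =>
    have hp : (k+2+1).choose 2 = (k+2).choose 1 + (k+2).choose 2 :=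
      Nat.choose_succ_succ (k+2) 1
    rw [show k+1+2 = k+2+1 from by omega, hp, Nat.choose_one_right]
    push_cast
    push_cast at ih
    linarith [ih]

lemma choose3 (n : ℕ) : ((n+2).choose 3 : ℚ) = (n+2)*(n+1)*n/6 := by
  induction n with
  | zero => norm_num [Nat.choose]
  | succ k ih =>
    have hp : (k+2+1).choose 3 = (k+2).choose 2 + (k+2).choose 3 :=
      Nat.choose_succ_succ (k+2) 2
    rw [show k+1+2 = k+2+1 from by omega, hp, Nat.cast_add, choose2]
    push_cast
    push_cast at ih
    linarith [ih]

lemma mono_of_adj {n : ℕ} (h : ∀ k, 5 ≤ k → k < n → c (k+1) < c k) :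
    ∀ a b, 5 ≤ a → a ≤ b → b ≤ n → c b ≤ c a := by
  intro a b h5 hab hbn
  induction b with
  | zero => omega
  | succ b ih =>
    rcases Nat.lt_or_ge a (b+1) with hlt | hge
    · have h1 : c (b+1) < c b := h b (by omega) (by omega)
      have h2 : c b ≤ c a := ih (by omega) (by omega)
      linarith
    · have : a = b + 1 := by omega
      rw [this]

set_option maxHeartbeats 1000000 in
lemma key : ∀ m : ℕ, (∀ k, 5 ≤ k → k < m + 12 → c (k+1) < c k) ∧
    1703/1000 * 2^(m+12) + (7/1000) * ((m:ℚ)+12)^3 ≤ c (m+12) * 2^(m+12) := by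
  intro m
  induction m with
  | zero =>
    constructor
    · intro k h1 h2
      interval_cases k <;> norm_num [c5, c6, c7, c8, c9, c10, c11, c12]
    · norm_num [c12]
  | succ m ih =>
    obtain ⟨hadj, hlb⟩ := ih
    have ht : (0:ℚ) < 2^(m+12) := by positivity
    have hx : (0:ℚ) ≤ (m:ℚ) := Nat.cast_nonneg m
    have hmono := mono_of_adj hadj
    have hub : c (m+12) ≤ 1707/1000 := by
      have h1 : c (m+12) ≤ c 12 := hmono 12 (m+12) (by omega) (by omega) (le_refl _)
      rw [c12] at h1; linarith
    have hL : 1703/1000 ≤ c (m+12) := by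
      have h7 : (0:ℚ) ≤ (7/1000) * ((m:ℚ)+12)^3 := by positivity
      nlinarith [hlb]
    have h4' : c (m+12) ≤ c 4 := by rw [c4]; linarith
    have heq := c_step (m+11) (by omega) (by
        intro a b ha hab hb
        exact hmono a b ha hab (by omega))
      (by rw [show m+11+1 = m+12 from by omega]; exact h4')
      (by rw [show m+11+1 = m+12 from by omega]; linarith)
    rw [show m+11+1 = m+12 from by omega, show m+11+2 = m+13 from by omega,
      choose2 (m+11), choose3 (m+11)] at heq
    set a := c (m+12) with hadef
    set x := (m:ℚ) with hxdef
    -- E expression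
    have hK : (0:ℚ) ≤ (x+13) + (x+13)*(x+12)/2 + (x+13)*(x+12)*(x+11)/6 + 2 := by positivity
    set E := 3*((x:ℚ)+11+2) - (x+11+2)*a + ((x+11+2)*(x+11+1)/2)*(3/2 - a)
      + ((x+11+2)*(x+11+1)*(x+11)/6)*(27/16 - a) - 2*a with hEdef
    have heq' : c (m+13) = a + (1/2^(m+13)) * E := by
      rw [heq, hEdef, hxdef]; push_cast; ring_nf
    have hEneg : E < 0 := by
      have hid : E = (-(1703/250) - (28247/12000)*x - (389/2000)*x^2 - (31/12000)*x^3)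
          - (a - 1703/1000)*((x+13) + (x+13)*(x+12)/2 + (x+13)*(x+12)*(x+11)/6 + 2) := by
        rw [hEdef]; ring
      rw [hid]
      have hp1 : (0:ℚ) ≤ (a - 1703/1000)*((x+13) + (x+13)*(x+12)/2 + (x+13)*(x+12)*(x+11)/6 + 2) :=
        mul_nonneg (by linarith) hK
      nlinarith [hx, sq_nonneg x, mul_nonneg (mul_nonneg hx hx) hx, mul_nonneg hx hx]
    have hEU : (3*(x+13) - (x+13)*(1707/1000) + ((x+13)*(x+12)/2)*(3/2 - 1707/1000)
        + ((x+13)*(x+12)*(x+11)/6)*(27/16 - 1707/1000) - 2*(1707/1000)) ≤ E := by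
      have hid : E = (3*(x+13) - (x+13)*(1707/1000) + ((x+13)*(x+12)/2)*(3/2 - 1707/1000)
          + ((x+13)*(x+12)*(x+11)/6)*(27/16 - 1707/1000) - 2*(1707/1000))
          + (1707/1000 - a)*((x+13) + (x+13)*(x+12)/2 + (x+13)*(x+12)*(x+11)/6 + 2) := by
        rw [hEdef]; ring
      rw [hid]
      have hp1 : (0:ℚ) ≤ (1707/1000 - a)*((x+13) + (x+13)*(x+12)/2 + (x+13)*(x+12)*(x+11)/6 + 2) :=
        mul_nonneg (by linarith) hK
      linarith
    have hcond2 : (7/1000)*(x+13)^3 ≤ (14/1000)*(x+12)^3 +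
        (3*(x+13) - (x+13)*(1707/1000) + ((x+13)*(x+12)/2)*(3/2 - 1707/1000)
        + ((x+13)*(x+12)*(x+11)/6)*(27/16 - 1707/1000) - 2*(1707/1000)) := by
      nlinarith [mul_nonneg hx (sq_nonneg (x-4)), sq_nonneg (324*x - 1025)]
    have hdec : c (m+13) < c (m+12) := by
      rw [heq']
      have hq : (0:ℚ) < 1/2^(m+13) := by positivity
      nlinarith [mul_pos hq (neg_pos.mpr hEneg)]
    constructor
    · intro k h1 h2
      rcases Nat.lt_or_ge k (m+12) with hk | hk
      · exact hadj k h1 hk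
      · have : k = m + 12 := by omega
        rw [this, show m+12+1 = m+13 from by omega]
        exact hdec
    · -- lower bound at m+13
      have ht13 : (0:ℚ) < 2^(m+13) := by positivity
      have h2pow : (2:ℚ)^(m+13) = 2 * 2^(m+12) := by ring
      have hmul : c (m+13) * 2^(m+13) = a * 2^(m+13) + E := by
        rw [heq']; field_simp
      rw [show m+1+12 = m+13 from by omega, hmul]
      have hcast : ((m+1:ℕ):ℚ) + 12 = x + 13 := by rw [hxdef]; push_cast; ring
      rw [hcast, h2pow]
      -- from hlb : 1703/1000 * 2^(m+12) + (7/1000)*(x+12)^3 ≤ a * 2^(m+12)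
      linarith [hlb, hEU, hcond2]

theorem c_strict_anti : StrictAntiOn c (Set.Ici 5) := by
  have adj : ∀ k, 5 ≤ k → c (k+1) < c k := fun k h5 => (key k).1 k h5 (by omega)
  intro p hp q hq hpq
  simp only [Set.mem_Ici] at hp hq
  clear hq
  induction q with
  | zero => omega
  | succ q ih =>
    rcases Nat.lt_or_ge p q with h | h
    · have h1 : c (q+1) < c q := adj q (by omega)
      have h2 : c q < c p := ih h
      linarith
    · have : p = q := by omega
      rw [← this]
      exact adj p hp
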